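/- arXiv:1011.6513 — 10 statements merged into one kernel-verified Lean document; each statement's English description precedes it below -/
import Mathlib

section
/- The dynamical system x' = q₊(y − x) + β(x² − x), −y' = q₋(x − y) + β(y² − y) has no equilibria in the interior of the unit square: there are no real numbers x, y with 0 < x < 1 and 0 < y < 1 such that q₊(y − x) + β(x² − x) = 0 and q₋(x − y) + β(y² − y) = 0. -/
lemma lt_of_mul_sub_add_mul_sq_sub_self_eq_zero {q β x y : ℝ} (hq : 0 < q) (hβ : 0 < β)
    (hx0 : 0 < x) (hx1 : x < 1) (h : q * (y - x) + β * (x ^ 2 - x) = 0) : x < y := by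
  have hsq : x ^ 2 - x < 0 := by nlinarith
  have hpos : 0 < q * (y - x) := by nlinarith [mul_neg_of_pos_of_neg hβ hsq]
  exact sub_pos.mp (pos_of_mul_pos_right hpos hq.le)

/-- The dynamical system `x' = q₊(y − x) + β(x² − x)`, `−y' = q₋(x − y) + β(y² − y)`
has no equilibria in the interior of the unit square. -/
theorem no_equilibria_in_interior
    (qm qp β : ℝ) (hqp : 0 < qp) (hq : qp < qm) (hβ : 0 < β) :
    ¬ ∃ x y : ℝ, 0 < x ∧ x < 1 ∧ 0 < y ∧ y < 1 ∧
      qp * (y - x) + β * (x ^ 2 - x) = 0 ∧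
      qm * (x - y) + β * (y ^ 2 - y) = 0 := by
  rintro ⟨x, y, hx0, hx1, hy0, hy1, h1, h2⟩
  have hxy : x < y := lt_of_mul_sub_add_mul_sq_sub_self_eq_zero hqp hβ hx0 hx1 h1
  have hyx : y < x := lt_of_mul_sub_add_mul_sq_sub_self_eq_zero (hqp.trans hq) hβ hy0 hy1 h2
  exact lt_asymm hxy hyx
end

section
/- For every integer n ≥ 2, the quantity K₊ + n K₋ − (n + 1) q₋ a₁ is strictly positive, where a₁ := (K₋ + K₊ − √((K₋ + K₊)² − 4 q₋ q₊)) / (2 q₋). -/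
/-!
`q₋ a₁` is the smaller root `(S - √(S² - 4P))/2` of `x² - S x + P` with `S = K₋ + K₊` and
`P = q₋ q₊ ≤ K₋ K₊`. Since `S² - 4P ≥ (K₋ - K₊)²`, this root is at most `min K₋ K₊ = K₊ < K₋`,
and the denominator splits as `(K₊ - q₋ a₁) + n (K₋ - q₋ a₁) > 0`.
-/

lemma half_sub_sqrt_le_min {u v p : ℝ} (hp : p ≤ u * v) :
    (u + v - √((u + v) ^ 2 - 4 * p)) / 2 ≤ min u v := by
  have habs : |u - v| ≤ √((u + v) ^ 2 - 4 * p) := Real.abs_le_sqrt (by nlinarith)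
  obtain ⟨hvu, huv⟩ := abs_le.mp habs
  exact le_min (by linarith) (by linarith)

/-- For every integer `n ≥ 2`, the denominator `K₊ + n K₋ − (n+1) q₋ a₁` of the
recurrence is strictly positive. -/
theorem denominator_pos
    (qm qp β Kp Km a1 : ℝ) (hqp : 0 < qp) (hq : qp < qm) (hβ : 0 < β)
    (hKp : Kp = qp + β) (hKm : Km = qm + β)
    (ha1 : a1 = (Km + Kp - Real.sqrt ((Km + Kp) ^ 2 - 4 * qm * qp)) / (2 * qm)) :
    ∀ n : ℕ, 2 ≤ n → 0 < Kp + (n : ℝ) * Km - ((n : ℝ) + 1) * qm * a1 := by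
  intro n hn
  have hqm : 0 < qm := hqp.trans hq
  have hroot : qm * a1 = (Km + Kp - √((Km + Kp) ^ 2 - 4 * (qm * qp))) / 2 := by
    rw [ha1, ← mul_assoc]; field_simp
  have hprod : qm * qp ≤ Km * Kp := by rw [hKm, hKp]; nlinarith
  have hle : qm * a1 ≤ Kp := hroot ▸ (half_sub_sqrt_le_min hprod).trans (min_le_right _ _)
  have hlt : qm * a1 < Km := by linarith
  have hn : (0 : ℝ) < n := by exact_mod_cast (by omega : 0 < n)
  calc (0 : ℝ) < (Kp - qm * a1) + n * (Km - qm * a1) :=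
        add_pos_of_nonneg_of_pos (sub_nonneg.mpr hle) (mul_pos hn (sub_pos.mpr hlt))
    _ = Kp + n * Km - (n + 1) * qm * a1 := by ring
end

section
/- With the sequence (aₙ) defined by a₀ = 0, a₁ = (K₋ + K₊ − √((K₋ + K₊)² − 4 q₋ q₊)) / (2 q₋), and aₙ = [β ∑_{k=1}^{n−1} aₖ a_{n−k} + q₋ ∑_{k=1}^{n−2} (k+1) a_{k+1} a_{n−k} + β (n−1) a_{n−1}] / (K₊ + n K₋ − (n+1) q₋ a₁) for n ≥ 2, set A_N(y) = ∑_{n=0}^N aₙ yⁿ. Then for every N ≥ 1 and every y with 0 < y < 1, one has −q₊ y − β A_N(y)² + K₊ A_N(y) ≤ A_N'(y) · (q₋ A_N(y) + β y² − K₋ y), where A_N' is the derivative of the polynomial A_N. -/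
/-!
`A_N` nearly solves the first-order equation `A' (q₋ A + β y² − K₋ y) = −q₊ y − β A² + K₊ A`:
the choice of `a₁` (the smaller root of `q₋ x² − (K₋ + K₊) x + q₊`) and the recursion for `aₙ`
say precisely that the formal series `∑ aₙ yⁿ` solves it coefficient by coefficient. So in the
residual polynomial `A_N' (q₋ A_N + β y² − K₋ y) + q₊ y + β A_N² − K₊ A_N` every coefficient of
degree `≤ N` vanishes (`a₀ = 0` makes the truncation harmless there), while those of higher degree
only collect products of the `aₙ`, which are nonnegative because the recursion has positive
denominators. A polynomial with nonnegative coefficients is nonnegative for `y ≥ 0`.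
-/

open Finset Polynomial

theorem Finset.sum_range_add_two_eq_add_sum_Icc {M : Type*} [AddCommMonoid M] (f : ℕ → M) (n : ℕ) :
    ∑ k ∈ range (n + 2), f k = f 0 + ∑ k ∈ Icc 1 n, f k + f (n + 1) := by
  rw [sum_range_succ, range_eq_Ico, sum_eq_sum_Ico_succ_bot (by omega), Ico_add_one_right_eq_Icc]

theorem Polynomial.eval_nonneg_of_coeff_nonneg {R : Type*} [Semiring R] [PartialOrder R]
    [IsOrderedRing R] {p : R[X]} (hp : ∀ i, 0 ≤ p.coeff i) {x : R} (hx : 0 ≤ x) :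
    0 ≤ p.eval x := by
  rw [eval_eq_sum_range]
  exact sum_nonneg fun i _ => mul_nonneg (hp i) (pow_nonneg hx i)

theorem Polynomial.coeff_sum_range_C_mul_X_pow {R : Type*} [Semiring R] (a : ℕ → R) (N i : ℕ) :
    (∑ n ∈ range (N + 1), C (a n) * X ^ n).coeff i = if i ≤ N then a i else 0 := by
  simp [coeff_C_mul, coeff_X_pow]

theorem quadratic_smaller_root {q b c x : ℝ} (hq : 0 < q) (hb : 0 ≤ b) (hc : 0 ≤ c)
    (hdisc : 4 * q * c ≤ b ^ 2) (hx : x = (b - √(b ^ 2 - 4 * q * c)) / (2 * q)) :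
    q * x ^ 2 - b * x + c = 0 ∧ 0 ≤ x ∧ 2 * q * x ≤ b := by
  have hs : √(b ^ 2 - 4 * q * c) ^ 2 = b ^ 2 - 4 * q * c := Real.sq_sqrt (by linarith)
  have hs_le : √(b ^ 2 - 4 * q * c) ≤ b := Real.sqrt_le_iff.mpr ⟨hb, by nlinarith⟩
  have hs_nonneg := Real.sqrt_nonneg (b ^ 2 - 4 * q * c)
  set s := √(b ^ 2 - 4 * q * c)
  subst hx
  refine ⟨?_, div_nonneg (by linarith) (by positivity), ?_⟩
  · field_simp
    linear_combination hs
  · rw [mul_div_cancel₀ _ (by positivity)]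
    linarith

section Residual

variable (qm qp β Kp Km : ℝ)

def recursionNumerator (a : ℕ → ℝ) (n : ℕ) : ℝ :=
  β * ∑ k ∈ Icc 1 (n - 1), a k * a (n - k)
    + qm * ∑ k ∈ Icc 1 (n - 2), ((k : ℝ) + 1) * a (k + 1) * a (n - k)
    + β * ((n : ℝ) - 1) * a (n - 1)

noncomputable def odeResidual (p : ℝ[X]) : ℝ[X] :=
  derivative p * (C qm * p + C β * X ^ 2 - C Km * X) + C qp * X + C β * p ^ 2 - C Kp * p

/- At `m = 0` truncated subtraction turns `β * (m - 1) * c (m - 1)` into `-β * c 0`,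
which is why `coeff_odeResidual` needs `p.coeff 0 = 0`. -/
def odeResidualCoeff (c : ℕ → ℝ) (m : ℕ) : ℝ :=
  qm * ∑ k ∈ range (m + 1), c (k + 1) * (k + 1) * c (m - k)
    + β * ((m : ℝ) - 1) * c (m - 1) - Km * m * c m + (if m = 1 then qp else 0)
    + β * ∑ k ∈ range (m + 1), c k * c (m - k) - Kp * c m

theorem recursionNumerator_nonneg (hqm : 0 ≤ qm) (hβ : 0 ≤ β) {a : ℕ → ℝ} {n : ℕ} (hn : 1 ≤ n)
    (ha : ∀ k < n, 0 ≤ a k) : 0 ≤ recursionNumerator qm β a n := by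
  have h₁ : 0 ≤ ∑ k ∈ Icc 1 (n - 1), a k * a (n - k) :=
    sum_nonneg fun k hk => by
      rw [mem_Icc] at hk
      exact mul_nonneg (ha k (by omega)) (ha (n - k) (by omega))
  have h₂ : 0 ≤ ∑ k ∈ Icc 1 (n - 2), ((k : ℝ) + 1) * a (k + 1) * a (n - k) :=
    sum_nonneg fun k hk => by
      rw [mem_Icc] at hk
      exact mul_nonneg (mul_nonneg (by positivity) (ha (k + 1) (by omega))) (ha (n - k) (by omega))
  have h₃ : (0 : ℝ) ≤ n - 1 := by
    rw [sub_nonneg]; exact_mod_cast hn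
  have h₄ := ha (n - 1) (by omega)
  unfold recursionNumerator
  positivity

theorem nonneg_of_recursion (hqm : 0 ≤ qm) (hβ : 0 ≤ β) {a D : ℕ → ℝ}
    (hD : ∀ n, 2 ≤ n → 0 < D n) (ha0 : 0 ≤ a 0) (ha1 : 0 ≤ a 1)
    (hrec : ∀ n, 2 ≤ n → a n = recursionNumerator qm β a n / D n) (n : ℕ) : 0 ≤ a n := by
  induction n using Nat.strong_induction_on with
  | _ n ih =>
    match n with
    | 0 => exact ha0
    | 1 => exact ha1
    | n + 2 =>
      rw [hrec _ (by omega)]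
      exact div_nonneg (recursionNumerator_nonneg qm β hqm hβ (by omega) ih) (hD _ (by omega)).le

theorem coeff_odeResidual {p : ℝ[X]} (hp : p.coeff 0 = 0) (m : ℕ) :
    (odeResidual qm qp β Kp Km p).coeff m = odeResidualCoeff qm qp β Kp Km p.coeff m := by
  have h : odeResidual qm qp β Kp Km p = C qm * (derivative p * p) + C β * (derivative p * X ^ 2)
      - C Km * (derivative p * X) + C qp * X + C β * (p * p) - C Kp * p := by
    unfold odeResidual; ring
  have hmul (q r : ℝ[X]) : (q * r).coeff m = ∑ k ∈ range (m + 1), q.coeff k * r.coeff (m - k) := by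
    rw [coeff_mul, Nat.sum_antidiagonal_eq_sum_range_succ_mk]
  rw [h]
  simp only [coeff_add, coeff_sub, coeff_C_mul, hmul (derivative p) p, hmul p p, coeff_derivative,
    odeResidualCoeff]
  rcases m with _ | _ | m
  · simp [coeff_X, hp]
  · simp [coeff_mul_X_pow', coeff_X, coeff_derivative]
  · simp only [coeff_mul_X_pow', coeff_mul_X, coeff_X, if_pos (show 2 ≤ m + 2 by omega),
      if_neg (show 1 ≠ m + 2 by omega), Nat.add_sub_cancel, coeff_derivative, mul_zero]
    push_cast
    ring

theorem odeResidualCoeff_eq_zero {a : ℕ → ℝ} (ha0 : a 0 = 0)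
    (ha1 : qm * a 1 ^ 2 - (Km + Kp) * a 1 + qp = 0)
    (hrec : ∀ n, 2 ≤ n → a n * (Kp + n * Km - (n + 1) * qm * a 1) = recursionNumerator qm β a n) :
    ∀ m, odeResidualCoeff qm qp β Kp Km a m = 0
  | 0 => by simp [odeResidualCoeff, ha0]
  | 1 => by
    simp only [odeResidualCoeff, sum_range_succ, sum_range_zero, zero_add, Nat.sub_zero,
      Nat.sub_self, ha0, if_pos]
    linear_combination ha1
  | n + 2 => by
    have h := hrec (n + 2) (by omega)
    have hsum : ∑ k ∈ Icc 1 n, a (k + 1) * (k + 1) * a (n + 2 - k)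
        = ∑ k ∈ Icc 1 n, (k + 1) * a (k + 1) * a (n + 2 - k) :=
      sum_congr rfl fun k _ => by ring
    rw [recursionNumerator, show n + 2 - 1 = n + 1 from rfl, Nat.add_sub_cancel] at h
    rw [odeResidualCoeff, sum_range_add_two_eq_add_sum_Icc, sum_range_add_two_eq_add_sum_Icc,
      sum_Icc_succ_top (by omega), hsum, if_neg (by omega), Nat.sub_zero,
      show n + 2 - 1 = n + 1 from rfl,
      show n + 2 - (n + 1) = 1 by omega, show n + 2 - (n + 1 + 1) = 0 by omega, ha0]
    push_cast at h ⊢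
    linear_combination -h

theorem odeResidualCoeff_nonneg_of_eq_zero (hqm : 0 ≤ qm) (hqp : 0 ≤ qp) (hβ : 0 ≤ β)
    {c : ℕ → ℝ} (hc : ∀ i, 0 ≤ c i) {m : ℕ} (hm : c m = 0) :
    0 ≤ odeResidualCoeff qm qp β Kp Km c m := by
  have h₁ : 0 ≤ ∑ k ∈ range (m + 1), c (k + 1) * (k + 1) * c (m - k) :=
    sum_nonneg fun k _ => by have := hc (k + 1); have := hc (m - k); positivity
  have h₂ : 0 ≤ ∑ k ∈ range (m + 1), c k * c (m - k) :=
    sum_nonneg fun k _ => mul_nonneg (hc k) (hc (m - k))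
  have h₃ : 0 ≤ β * ((m : ℝ) - 1) * c (m - 1) := by
    rcases m with _ | m
    · simp [hm]
    · have := hc m; push_cast; simp only [add_sub_cancel_right]; positivity
  have h₄ : (0 : ℝ) ≤ if m = 1 then qp else 0 := by split_ifs <;> simp [hqp]
  rw [odeResidualCoeff, hm]
  nlinarith

theorem odeResidualCoeff_truncate {a : ℕ → ℝ} (ha0 : a 0 = 0) {N m : ℕ} (hm : m ≤ N) :
    odeResidualCoeff qm qp β Kp Km (fun i => if i ≤ N then a i else 0) m
      = odeResidualCoeff qm qp β Kp Km a m := by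
  have h₁ : ∑ k ∈ range (m + 1), (if k + 1 ≤ N then a (k + 1) else 0) * (k + 1)
        * (if m - k ≤ N then a (m - k) else 0)
      = ∑ k ∈ range (m + 1), a (k + 1) * (k + 1) * a (m - k) :=
    sum_congr rfl fun k hk => by
      rw [mem_range] at hk
      rw [if_pos (show m - k ≤ N by omega)]
      -- `k = m = N` is the only index reaching `a (N + 1)`, and there it meets `a 0 = 0`
      rcases (by omega : k + 1 ≤ N ∨ m - k = 0) with h | h
      · rw [if_pos h]
      · simp [h, ha0]
  have h₂ : ∑ k ∈ range (m + 1), (if k ≤ N then a k else 0) * (if m - k ≤ N then a (m - k) else 0)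
      = ∑ k ∈ range (m + 1), a k * a (m - k) :=
    sum_congr rfl fun k hk => by
      rw [mem_range] at hk
      rw [if_pos (by omega), if_pos (by omega)]
  simp only [odeResidualCoeff, h₁, h₂, if_pos hm, if_pos (show m - 1 ≤ N by omega)]

theorem coeff_odeResidual_partialSum_nonneg (hqm : 0 ≤ qm) (hqp : 0 ≤ qp) (hβ : 0 ≤ β)
    {a : ℕ → ℝ} (ha : ∀ n, 0 ≤ a n) (ha0 : a 0 = 0)
    (hres : ∀ m, odeResidualCoeff qm qp β Kp Km a m = 0) (N m : ℕ) :
    0 ≤ (odeResidual qm qp β Kp Km (∑ n ∈ range (N + 1), C (a n) * X ^ n)).coeff m := by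
  have hp := funext (coeff_sum_range_C_mul_X_pow a N)
  rw [coeff_odeResidual _ _ _ _ _ (by simp [ha0]), hp]
  rcases le_or_gt m N with hm | hm
  · rw [odeResidualCoeff_truncate _ _ _ _ _ ha0 hm, hres]
  · refine odeResidualCoeff_nonneg_of_eq_zero qm qp β Kp Km hqm hqp hβ (fun i => ?_) ?_
    · split_ifs <;> simp [ha]
    · simp only [if_neg (show ¬ m ≤ N by omega)]

end Residual

/-- Inequality (3.2): for the partial sums `A_N(y) = ∑_{n=0}^N aₙ yⁿ`, for every
`N ≥ 1` and `0 < y < 1`,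
`−q₊ y − β A_N(y)² + K₊ A_N(y) ≤ A_N'(y)(q₋ A_N(y) + β y² − K₋ y)`. -/
theorem partial_sum_inequality
    (qm qp β Kp Km a1 : ℝ) (hqp : 0 < qp) (hq : qp < qm) (hβ : 0 < β)
    (hKp : Kp = qp + β) (hKm : Km = qm + β)
    (ha1 : a1 = (Km + Kp - Real.sqrt ((Km + Kp) ^ 2 - 4 * qm * qp)) / (2 * qm))
    (a : ℕ → ℝ) (ha0 : a 0 = 0) (ha1' : a 1 = a1)
    (harec : ∀ n : ℕ, 2 ≤ n → a n =
      (β * ∑ k ∈ Finset.Icc 1 (n - 1), a k * a (n - k)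
        + qm * ∑ k ∈ Finset.Icc 1 (n - 2), ((k : ℝ) + 1) * a (k + 1) * a (n - k)
        + β * ((n : ℝ) - 1) * a (n - 1))
      / (Kp + (n : ℝ) * Km - ((n : ℝ) + 1) * qm * a1)) :
    ∀ N : ℕ, 1 ≤ N → ∀ y : ℝ, 0 < y → y < 1 →
      -qp * y - β * (∑ n ∈ Finset.range (N + 1), a n * y ^ n) ^ 2
        + Kp * (∑ n ∈ Finset.range (N + 1), a n * y ^ n)
      ≤ deriv (fun t : ℝ => ∑ n ∈ Finset.range (N + 1), a n * t ^ n) y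
          * (qm * (∑ n ∈ Finset.range (N + 1), a n * y ^ n) + β * y ^ 2 - Km * y) := by
  intro N _ y hy _
  have hqm : 0 < qm := hqp.trans hq
  obtain ⟨ha1_root, ha1_nonneg, ha1_le⟩ :=
    quadratic_smaller_root hqm (by linarith) hqp.le (by nlinarith) ha1
  have hD : ∀ n : ℕ, 2 ≤ n → 0 < Kp + n * Km - (n + 1) * qm * a1 := fun n hn => by
    have : (2 : ℝ) ≤ n := by exact_mod_cast hn
    nlinarith
  have ha_nonneg : ∀ n, 0 ≤ a n :=
    nonneg_of_recursion qm β hqm.le hβ.le hD ha0.ge (ha1' ▸ ha1_nonneg) harec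
  have hres : ∀ m, odeResidualCoeff qm qp β Kp Km a m = 0 :=
    odeResidualCoeff_eq_zero qm qp β Kp Km ha0 (ha1' ▸ ha1_root) fun n hn => by
      rw [ha1']
      exact (eq_div_iff (hD n hn).ne').mp (harec n hn)
  set p : ℝ[X] := ∑ n ∈ range (N + 1), C (a n) * X ^ n
  have hp_eval : (fun t => ∑ n ∈ range (N + 1), a n * t ^ n) = fun t => p.eval t := by
    simp [p, eval_finsetSum]
  have hR := eval_nonneg_of_coeff_nonneg (coeff_odeResidual_partialSum_nonneg
    qm qp β Kp Km hqm.le hqp.le hβ.le ha_nonneg ha0 hres N) hy.le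
  simp only [odeResidual, eval_add, eval_sub, eval_mul, eval_C, eval_pow, eval_X] at hR
  rw [hp_eval, Polynomial.deriv, congrFun hp_eval y]
  linarith
end

section
/- With the sequence (aₙ) defined by a₀ = 0, a₁ = (K₋ + K₊ − √((K₋ + K₊)² − 4 q₋ q₊)) / (2 q₋), and aₙ = [β ∑_{k=1}^{n−1} aₖ a_{n−k} + q₋ ∑_{k=1}^{n−2} (k+1) a_{k+1} a_{n−k} + β (n−1) a_{n−1}] / (K₊ + n K₋ − (n+1) q₋ a₁) for n ≥ 2, the series ∑_{n=0}^∞ aₙ is summable and its sum satisfies ∑_{n=0}^∞ aₙ ≤ q₊ / (q₋ + β). -/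
/-!
`a₁` is the smaller root of `q₋x² − (K₋ + K₊)x + q₊`, and the recursion is the coefficientwise form
of `K₊A + K₋xA' = βA² + q₋AA' + βx²A' + q₊x` for `A = ∑ aₙxⁿ`. Summing coefficients up to `N`
expresses `K₊S_N + K₋T_N`, with `S_N = ∑_{k ≤ N} a_k` and `T_N = ∑_{k ≤ N} k a_k`, through
convolutions of `a` with lower `S` and `T`. By strong induction this gives `q₋T_N + βS_N ≤ q₊`:
all convolution terms but the one with `a₁` are bounded by the induction hypothesis, and the
`a₁`-term is absorbed because `a₁ < 1` (indeed `K₋a₁ ≤ q₊`). As `S_N ≤ T_N`, we get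
`(q₋ + β)S_N ≤ q₊`.
-/

open Finset

/-- The smaller root of `c x² - s x + d`. -/
noncomputable def smallerRoot (c s d : ℝ) : ℝ := (s - √(s ^ 2 - 4 * c * d)) / (2 * c)

section SmallerRoot

variable {c s d : ℝ}

theorem smallerRoot_isRoot (hc : c ≠ 0) (hD : 0 ≤ s ^ 2 - 4 * c * d) :
    c * smallerRoot c s d ^ 2 - s * smallerRoot c s d + d = 0 := by
  have hsq := Real.sq_sqrt hD
  unfold smallerRoot
  generalize √(s ^ 2 - 4 * c * d) = r at hsq ⊢
  field_simp
  linear_combination hsq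

theorem smallerRoot_nonneg (hc : 0 < c) (hs : 0 ≤ s) (hd : 0 ≤ d) : 0 ≤ smallerRoot c s d := by
  refine div_nonneg (sub_nonneg.2 ?_) (by positivity)
  calc √(s ^ 2 - 4 * c * d) ≤ √(s ^ 2) := Real.sqrt_le_sqrt (by nlinarith [mul_nonneg hc.le hd])
    _ = s := Real.sqrt_sq hs

theorem smallerRoot_le_of_nonpos (hc : 0 < c) {x : ℝ} (hx : c * x ^ 2 - s * x + d ≤ 0) :
    smallerRoot c s d ≤ x := by
  rw [smallerRoot, div_le_iff₀ (by positivity), sub_le_comm]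
  exact (le_abs_self _).trans (Real.abs_le_sqrt (by nlinarith))

end SmallerRoot

theorem add_mul_smallerRoot_le {qm qp β : ℝ} (hqm : 0 < qm) (hqp : 0 ≤ qp) (hβ : 0 ≤ β) :
    (qm + β) * smallerRoot qm (qm + β + (qp + β)) qp ≤ qp := by
  rw [← le_div_iff₀' (by positivity)]
  refine smallerRoot_le_of_nonpos hqm ?_
  have hval : qm * (qp / (qm + β)) ^ 2 - (qm + β + (qp + β)) * (qp / (qm + β)) + qp =
      -(β * (qm + qp + β)) * qp / (qm + β) ^ 2 := by
    field_simp
    ring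
  rw [hval]
  exact div_nonpos_of_nonpos_of_nonneg
    (mul_nonpos_of_nonpos_of_nonneg (neg_nonpos.2 (by positivity)) hqp) (by positivity)

theorem Finset.sum_Icc_one_eq_sum_range {M : Type*} [AddCommMonoid M] (f : ℕ → M) (m : ℕ) :
    ∑ k ∈ Icc 1 m, f k = ∑ k ∈ range m, f (k + 1) := by
  rw [← Ico_add_one_right_eq_Icc, sum_Ico_eq_sum_range]
  simp [add_comm]

theorem Finset.Nat.sum_antidiagonal_add_two {M : Type*} [AddCommMonoid M] (f : ℕ × ℕ → M)
    (m : ℕ) : ∑ p ∈ antidiagonal (m + 2), f p =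
      f (0, m + 2) + ∑ k ∈ Icc 1 (m + 1), f (k, m + 2 - k) + f (m + 2, 0) := by
  rw [Nat.sum_antidiagonal_eq_sum_range_succ_mk, sum_Icc_one_eq_sum_range, sum_range_succ,
    sum_range_succ']
  simp [add_comm]

theorem Finset.Nat.sum_antidiagonal_succ_mul_sum_range {R : Type*} [CommSemiring R]
    (a b : ℕ → R) (N : ℕ) :
    ∑ p ∈ antidiagonal (N + 1), a p.1 * ∑ k ∈ range (p.2 + 1), b k =
      ∑ p ∈ antidiagonal N, a p.1 * ∑ k ∈ range (p.2 + 1), b k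
        + ∑ p ∈ antidiagonal (N + 1), a p.1 * b p.2 := by
  simp only [Nat.sum_antidiagonal_succ', sum_range_succ _ (_ + 1), mul_add, sum_add_distrib,
    zero_add, range_one, sum_singleton]
  ring

section Convolution

variable {R : Type*} [CommSemiring R] {a : ℕ → R}

theorem sum_Icc_mul_eq_sum_antidiagonal (ha0 : a 0 = 0) (n : ℕ) :
    ∑ k ∈ Icc 1 (n + 1), a k * a (n + 2 - k) = ∑ p ∈ antidiagonal (n + 2), a p.1 * a p.2 := by
  simp [Nat.sum_antidiagonal_add_two, ha0]

theorem sum_antidiagonal_mul_cast_mul (ha0 : a 0 = 0) (n : ℕ) :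
    ∑ p ∈ antidiagonal (n + 3), a p.1 * (p.2 * a p.2) =
      ∑ k ∈ Icc 1 n, ((k : R) + 1) * a (k + 1) * a (n + 2 - k) + (n + 3) * a 1 * a (n + 2) := by
  rw [← Nat.sum_antidiagonal_swap, Nat.sum_antidiagonal_add_two, sum_Icc_one_eq_sum_range,
    sum_range_succ, sum_range_succ', sum_Icc_one_eq_sum_range]
  simp only [Prod.swap_prod_mk, Nat.cast_zero, ha0, mul_zero, Nat.reduceSubDiff, Nat.cast_add,
    Nat.cast_one, zero_add, Nat.add_one_sub_one, one_mul, add_tsub_cancel_left, Nat.cast_ofNat,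
    zero_mul, add_zero]
  rw [sum_congr rfl fun x _ => mul_comm (a (n + 1 - x)) _]
  ring

end Convolution

/-- The coefficient of `x ^ (n + 2)` in `K₊A + K₋xA' = βA² + q₋AA' + βx²A' + q₊x`. -/
def IsAntidiagonalRecurrence (qm qp β : ℝ) (a : ℕ → ℝ) : Prop :=
  ∀ n : ℕ, (qp + β + (n + 2) * (qm + β)) * a (n + 2) =
    β * ∑ p ∈ antidiagonal (n + 2), a p.1 * a p.2
      + qm * ∑ p ∈ antidiagonal (n + 3), a p.1 * (p.2 * a p.2) + β * (n + 1) * a (n + 1)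

section Sequence

variable {qm qp β : ℝ} {a : ℕ → ℝ}

theorem sum_range_le_sum_range_cast_mul (ha : ∀ n, 0 ≤ a n) (ha0 : a 0 = 0) (n : ℕ) :
    ∑ k ∈ range n, a k ≤ ∑ k ∈ range n, k * a k := by
  refine sum_le_sum fun k _ => ?_
  rcases k.eq_zero_or_pos with rfl | hk
  · simp [ha0]
  · exact le_mul_of_one_le_left (ha k) (by exact_mod_cast hk)

theorem nonneg_of_recurrence (hqm : 0 ≤ qm) (hβ : 0 ≤ β) (ha0 : 0 ≤ a 0) (ha1 : 0 ≤ a 1)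
    {D : ℕ → ℝ} (hD : ∀ n, 0 ≤ D n)
    (harec : ∀ n : ℕ, 2 ≤ n → a n =
      (β * ∑ k ∈ Icc 1 (n - 1), a k * a (n - k)
        + qm * ∑ k ∈ Icc 1 (n - 2), ((k : ℝ) + 1) * a (k + 1) * a (n - k)
        + β * ((n : ℝ) - 1) * a (n - 1)) / D n) (n : ℕ) :
    0 ≤ a n := by
  induction n using Nat.strong_induction_on with
  | _ n ih =>
    match n, ih with
    | 0, _ => exact ha0
    | 1, _ => exact ha1
    | n + 2, ih =>
      rw [harec (n + 2) le_add_self]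
      refine div_nonneg (add_nonneg (add_nonneg ?_ ?_) ?_) (hD _)
      · refine mul_nonneg hβ (sum_nonneg fun k hk => ?_)
        rw [mem_Icc] at hk
        exact mul_nonneg (ih k (by omega)) (ih _ (by omega))
      · refine mul_nonneg hqm (sum_nonneg fun k hk => ?_)
        rw [mem_Icc] at hk
        exact mul_nonneg (mul_nonneg (by positivity) (ih _ (by omega))) (ih _ (by omega))
      · exact mul_nonneg (mul_nonneg hβ (by push_cast; linarith)) (ih _ (by omega))

theorem isAntidiagonalRecurrence_of_eq_div (ha0 : a 0 = 0)
    (hden : ∀ n : ℕ, qp + β + n * (qm + β) - (n + 1) * qm * a 1 ≠ 0)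
    (harec : ∀ n : ℕ, 2 ≤ n → a n =
      (β * ∑ k ∈ Icc 1 (n - 1), a k * a (n - k)
        + qm * ∑ k ∈ Icc 1 (n - 2), ((k : ℝ) + 1) * a (k + 1) * a (n - k)
        + β * ((n : ℝ) - 1) * a (n - 1))
      / (qp + β + n * (qm + β) - (n + 1) * qm * a 1)) :
    IsAntidiagonalRecurrence qm qp β a := by
  intro n
  have h := harec (n + 2) le_add_self
  rw [eq_div_iff (hden _)] at h
  rw [← sum_Icc_mul_eq_sum_antidiagonal ha0, sum_antidiagonal_mul_cast_mul ha0]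
  simp only [show n + 2 - 1 = n + 1 by omega, Nat.add_sub_cancel, Nat.cast_add,
    Nat.cast_ofNat] at h
  linear_combination h

theorem partialSums_identity (ha0 : a 0 = 0)
    (hquad : qm * a 1 ^ 2 - (qm + β + (qp + β)) * a 1 + qp = 0)
    (hrec : IsAntidiagonalRecurrence qm qp β a)
    (N : ℕ) :
    (qp + β) * ∑ k ∈ range (N + 2), a k + (qm + β) * ∑ k ∈ range (N + 2), k * a k =
      β * ∑ p ∈ antidiagonal (N + 1), a p.1 * ∑ k ∈ range (p.2 + 1), a k
        + qm * ∑ p ∈ antidiagonal (N + 2), a p.1 * ∑ k ∈ range (p.2 + 1), k * a k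
        + β * ∑ k ∈ range (N + 1), k * a k + qp := by
  induction N with
  | zero =>
    simp only [sum_range_succ, range_one, sum_singleton, ha0, Nat.sum_antidiagonal_succ,
      HasAntidiagonal.antidiagonal_zero, range_zero, sum_empty]
    push_cast
    linear_combination -hquad
  | succ N ih =>
    rw [Nat.sum_antidiagonal_succ_mul_sum_range _ _ (N + 1),
      Nat.sum_antidiagonal_succ_mul_sum_range _ _ (N + 2), sum_range_succ _ (N + 2),
      sum_range_succ (fun k => (k : ℝ) * a k) (N + 2)]
    push_cast
    linear_combination (norm := (push_cast; ring))
      ih + hrec N - β * sum_range_succ (fun k => (k : ℝ) * a k) (N + 1)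

theorem sum_antidiagonal_partialSums_eq (ha0 : a 0 = 0) (N : ℕ) :
    β * ∑ p ∈ antidiagonal (N + 1), a p.1 * ∑ k ∈ range (p.2 + 1), a k
      + qm * ∑ p ∈ antidiagonal (N + 2), a p.1 * ∑ k ∈ range (p.2 + 1), k * a k =
    a 1 * (β * ∑ k ∈ range (N + 1), a k + qm * ∑ k ∈ range (N + 2), k * a k)
      + ∑ i ∈ range N, a (i + 2) *
        (β * ∑ k ∈ range (N - i), a k + qm * ∑ k ∈ range (N - i + 1), k * a k) := by
  rw [Nat.sum_antidiagonal_succ' (n := N + 1), Nat.sum_antidiagonal_succ, Nat.sum_antidiagonal_succ,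
    Nat.sum_antidiagonal_eq_sum_range_succ_mk, Nat.sum_antidiagonal_eq_sum_range_succ_mk]
  simp only [ha0, zero_mul, zero_add, sum_range_one, Nat.cast_zero, mul_zero]
  rw [mul_sum, mul_sum, ← sum_add_distrib, sum_range_succ', add_comm]
  congr 1
  · simp only [Nat.sub_zero]
    ring
  · refine sum_congr rfl fun i hi => ?_
    rw [show N - (i + 1) + 1 = N - i by rw [mem_range] at hi; omega]
    ring

theorem moment_add_partialSum_le (hβ : 0 ≤ β) (hqp : 0 ≤ qp) (ha : ∀ n, 0 ≤ a n) (ha0 : a 0 = 0)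
    (ha1 : a 1 < 1) (hquad : qm * a 1 ^ 2 - (qm + β + (qp + β)) * a 1 + qp = 0)
    (hrec : IsAntidiagonalRecurrence qm qp β a)
    (N : ℕ) :
    qm * ∑ k ∈ range (N + 1), k * a k + β * ∑ k ∈ range (N + 1), a k ≤ qp := by
  induction N using Nat.strong_induction_on with | _ N ih => ?_
  rcases N with _ | N
  · simpa [ha0] using hqp
  have hβS : ∀ m, β * ∑ k ∈ range m, a k ≤ β * ∑ k ∈ range (m + 1), a k := fun m => by
    rw [sum_range_succ]
    nlinarith [ha m]
  have hlower : ∑ i ∈ range N, a (i + 2) *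
      (β * ∑ k ∈ range (N - i), a k + qm * ∑ k ∈ range (N - i + 1), k * a k) ≤
      (∑ i ∈ range N, a (i + 2)) * qp := by
    rw [sum_mul]
    refine sum_le_sum fun i hi => mul_le_mul_of_nonneg_left ?_ (ha _)
    have := ih (N - i) (by rw [mem_range] at hi; omega)
    linarith [hβS (N - i)]
  have hS : ∑ k ∈ range (N + 2), a k = ∑ i ∈ range N, a (i + 2) + a 1 + a 0 := by
    rw [sum_range_succ', sum_range_succ']
  have hT : ∑ k ∈ range (N + 1), (k : ℝ) * a k ≤ ∑ k ∈ range (N + 2), (k : ℝ) * a k := by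
    rw [sum_range_succ _ (N + 1)]
    nlinarith [ha (N + 1)]
  have hid := partialSums_identity ha0 hquad hrec N
  rw [sum_antidiagonal_partialSums_eq ha0] at hid
  set S := ∑ k ∈ range (N + 2), a k
  set T := ∑ k ∈ range (N + 2), (k : ℝ) * a k
  have hfirst : a 1 * (β * ∑ k ∈ range (N + 1), a k + qm * T) ≤ a 1 * (qm * T + β * S) :=
    mul_le_mul_of_nonneg_left (by linarith [hβS (N + 1)]) (ha 1)
  have key : (1 - a 1) * (qm * T + β * S) ≤ (1 - a 1) * qp := by
    nlinarith
  exact le_of_mul_le_mul_left key (by linarith)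

end Sequence

/-- Result (3.1): the series `∑ aₙ` is summable with sum at most `q₊/(q₋+β)`. -/
theorem sum_le_ratio
    (qm qp β Kp Km a1 : ℝ) (hqp : 0 < qp) (hq : qp < qm) (hβ : 0 < β)
    (hKp : Kp = qp + β) (hKm : Km = qm + β)
    (ha1 : a1 = (Km + Kp - Real.sqrt ((Km + Kp) ^ 2 - 4 * qm * qp)) / (2 * qm))
    (a : ℕ → ℝ) (ha0 : a 0 = 0) (ha1' : a 1 = a1)
    (harec : ∀ n : ℕ, 2 ≤ n → a n =
      (β * ∑ k ∈ Finset.Icc 1 (n - 1), a k * a (n - k)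
        + qm * ∑ k ∈ Finset.Icc 1 (n - 2), ((k : ℝ) + 1) * a (k + 1) * a (n - k)
        + β * ((n : ℝ) - 1) * a (n - 1))
      / (Kp + (n : ℝ) * Km - ((n : ℝ) + 1) * qm * a1)) :
    Summable a ∧ ∑' n : ℕ, a n ≤ qp / (qm + β) := by
  subst hKp hKm ha1'
  have hqm : 0 < qm := hqp.trans hq
  have hroot : a 1 = smallerRoot qm (qm + β + (qp + β)) qp := ha1
  have hquad : qm * a 1 ^ 2 - (qm + β + (qp + β)) * a 1 + qp = 0 := by
    rw [hroot]
    exact smallerRoot_isRoot hqm.ne' (by nlinarith)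
  have ha1_nonneg : 0 ≤ a 1 := hroot ▸ smallerRoot_nonneg hqm (by positivity) hqp.le
  have ha1_le : (qm + β) * a 1 ≤ qp := hroot ▸ add_mul_smallerRoot_le hqm hqp.le hβ.le
  have hqma1 : qm * a 1 ≤ qm + β := by nlinarith
  have hden : ∀ n : ℕ, 0 < qp + β + n * (qm + β) - (n + 1) * qm * a 1 := fun n => by
    nlinarith [mul_le_mul_of_nonneg_left hqma1 n.cast_nonneg]
  have ha : ∀ n, 0 ≤ a n :=
    nonneg_of_recurrence hqm.le hβ.le ha0.ge ha1_nonneg (fun n => (hden n).le) harec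
  have hrec := isAntidiagonalRecurrence_of_eq_div ha0 (fun n => (hden n).ne') harec
  have hbound : ∀ n, ∑ k ∈ range n, a k ≤ qp / (qm + β) := fun n => by
    rw [le_div_iff₀ (by positivity)]
    have := moment_add_partialSum_le hβ.le hqp.le ha ha0 (by nlinarith) hquad hrec n
    nlinarith [sum_range_le_sum_range_cast_mul ha ha0 (n + 1), sum_range_succ a n, ha n]
  exact ⟨summable_of_sum_range_le ha hbound, Real.tsum_le_of_sum_range_le ha hbound⟩
end

section
/- With the sequence (aₙ) defined by a₀ = 0, a₁ = (K₋ + K₊ − √((K₋ + K₊)² − 4 q₋ q₊)) / (2 q₋), and aₙ = [β ∑_{k=1}^{n−1} aₖ a_{n−k} + q₋ ∑_{k=1}^{n−2} (k+1) a_{k+1} a_{n−k} + β (n−1) a_{n−1}] / (K₊ + n K₋ − (n+1) q₋ a₁) for n ≥ 2, define A(y) = ∑_{n=0}^∞ aₙ yⁿ for 0 ≤ y ≤ 1. Then A(y) < y for every y with 0 < y < 1. -/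
/-!
Write `A(y) = y w(y)` with `w(y) = ∑ aₙ₊₁ yⁿ`, so that `w(0) = a₁ < 1` (`a₁` is the smaller root
of `q₋ x² - (K₋ + K₊) x + q₊`, which is positive at `0` and negative at `1`) and the coefficients
are nonnegative. If `w(y) ≥ 1`, continuity gives `z ∈ (0, y]` with `A(z) = z`. Multiplying the
recurrence by `zⁿ⁺¹` and summing over `2 ≤ n ≤ N`, the convolutions are bounded by products of
partial sums of `A(z)`, which are at most `z`; this yields
`(K₊ - q₋ a₁) (A(z) - a₁ z) ≤ β z² (1 + a₁)`. Since `(K₊ - q₋ a₁)(1 - a₁) = β (1 + a₁)` by the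
quadratic equation for `a₁`, this forces `z ≥ 1`.
-/

open Finset

theorem Finset.sum_comp_le_sum_of_injOn {ι κ M : Type*} [AddCommMonoid M] [PartialOrder M]
    [IsOrderedAddMonoid M] {s : Finset ι} {t : Finset κ} {f : κ → M} (e : ι → κ) (he : Set.InjOn e s) (hest : Set.MapsTo e s t)
    (hf : ∀ j ∈ t, 0 ≤ f j) : ∑ i ∈ s, f (e i) ≤ ∑ j ∈ t, f j := by
  classical
  rw [← sum_image he]
  exact sum_le_sum_of_subset_of_nonneg (image_subset_iff.2 hest) fun j hj _ => hf j hj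

theorem Finset.sum_Icc_eq_add_sum_Icc_add_one {M : Type*} [AddCommMonoid M] (f : ℕ → M) {a b : ℕ} (h : a ≤ b) :
    ∑ k ∈ Icc a b, f k = f a + ∑ k ∈ Icc (a + 1) b, f k := by
  rw [← add_sum_Ioc_eq_sum_Icc h, Icc_add_one_left_eq_Ioc]

section Convolution

variable {p : ℕ → ℝ}

theorem sum_conv_le_sq (hp : ∀ n, 0 ≤ p n) (N : ℕ) :
    ∑ n ∈ Icc 2 N, ∑ k ∈ Icc 1 (n - 1), p k * p (n - k) ≤ (∑ k ∈ Icc 1 N, p k) ^ 2 := by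
  rw [sq, sum_mul_sum, ← sum_product', sum_sigma']
  refine sum_comp_le_sum_of_injOn (f := fun q : ℕ × ℕ => p q.1 * p q.2)
    (fun x : Σ _ : ℕ, ℕ => (x.2, x.1 - x.2)) ?_ ?_ fun _ _ => mul_nonneg (hp _) (hp _)
  · rintro ⟨n, k⟩ hx ⟨n', k'⟩ hx' h
    simp only [coe_sigma, Set.mem_sigma_iff, coe_Icc, Set.mem_Icc, Prod.mk.injEq] at hx hx' h
    simp only [Sigma.mk.injEq, heq_eq_eq]
    omega
  · rintro ⟨n, k⟩ hx
    simp only [coe_sigma, Set.mem_sigma_iff, coe_Icc, Set.mem_Icc, coe_product,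
      Set.mem_prod] at hx ⊢
    omega

theorem sum_weighted_conv_le (hp : ∀ n, 0 ≤ p n) (N : ℕ) :
    ∑ n ∈ Icc 2 N, ∑ k ∈ Icc 1 (n - 2), ((k : ℝ) + 1) * p (k + 1) * p (n - k)
      ≤ (∑ j ∈ Icc 2 N, (j : ℝ) * p j) * ∑ j ∈ Icc 2 N, p j := by
  rw [sum_mul_sum, ← sum_product', sum_sigma']
  refine le_of_eq_of_le (sum_congr rfl fun x _ => by push_cast; rfl)
    (sum_comp_le_sum_of_injOn (f := fun q : ℕ × ℕ => (q.1 : ℝ) * p q.1 * p q.2)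
      (fun x : Σ _ : ℕ, ℕ => (x.2 + 1, x.1 - x.2)) ?_ ?_
      fun _ _ => mul_nonneg (mul_nonneg (Nat.cast_nonneg _) (hp _)) (hp _))
  · rintro ⟨n, k⟩ hx ⟨n', k'⟩ hx' h
    simp only [coe_sigma, Set.mem_sigma_iff, coe_Icc, Set.mem_Icc, Prod.mk.injEq] at hx hx' h
    simp only [Sigma.mk.injEq, heq_eq_eq]
    omega
  · rintro ⟨n, k⟩ hx
    simp only [coe_sigma, Set.mem_sigma_iff, coe_Icc, Set.mem_Icc, coe_product,
      Set.mem_prod] at hx ⊢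
    omega

theorem sum_shift_le (hp : ∀ n, 0 ≤ p n) (N : ℕ) :
    ∑ n ∈ Icc 2 N, ((n : ℝ) - 1) * p (n - 1) ≤ ∑ m ∈ Icc 1 N, (m : ℝ) * p m := by
  refine le_of_eq_of_le (sum_congr rfl fun n hn => ?_)
    (sum_comp_le_sum_of_injOn (f := fun m : ℕ => (m : ℝ) * p m) (fun n => n - 1) ?_ ?_
      fun _ _ => mul_nonneg (Nat.cast_nonneg _) (hp _))
  · rw [mem_Icc] at hn
    rw [Nat.cast_sub (by omega), Nat.cast_one]
  · intro n hn n' hn' h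
    simp only [coe_Icc, Set.mem_Icc] at hn hn' h
    omega
  · intro n hn
    simp only [coe_Icc, Set.mem_Icc] at hn ⊢
    omega

end Convolution

theorem quadratic_root_mem_Ioo {c b q r : ℝ} (hc : 0 < c) (hq : 0 < q) (h1 : c - b + q < 0)
    (hr : r = (b - √(b ^ 2 - 4 * c * q)) / (2 * c)) :
    c * r ^ 2 - b * r + q = 0 ∧ 0 < r ∧ r < 1 := by
  have hb : 0 < b := by linarith
  have hd : 0 ≤ b ^ 2 - 4 * c * q := by nlinarith [sq_nonneg (c - q)]
  set s := √(b ^ 2 - 4 * c * q)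
  have hs : s ^ 2 = b ^ 2 - 4 * c * q := Real.sq_sqrt hd
  have hrs : 2 * c * r = b - s := by rw [hr]; field_simp
  refine ⟨?_, ?_, ?_⟩
  · have h4 : 4 * c * (c * r ^ 2 - b * r + q) = 0 := by
      linear_combination (2 * c * r - b - s) * hrs + hs
    simpa [hc.ne'] using h4
  · have : s < b := (Real.sqrt_lt' hb).2 (by nlinarith)
    nlinarith
  · have : b - 2 * c < s := Real.lt_sqrt_of_sq_lt (by nlinarith)
    nlinarith

theorem continuousOn_tsum_mul_pow {c : ℕ → ℝ} {y : ℝ} (hc : ∀ n, 0 ≤ c n)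
    (hs : Summable fun n => c n * y ^ n) :
    ContinuousOn (fun t => ∑' n, c n * t ^ n) (Set.Icc 0 y) := by
  refine continuousOn_tsum (fun n => (continuous_const.mul (continuous_pow n)).continuousOn) hs
    fun n t ht => ?_
  rw [norm_mul, norm_pow, Real.norm_of_nonneg (hc n), Real.norm_of_nonneg ht.1]
  exact mul_le_mul_of_nonneg_left (pow_le_pow_left₀ ht.1 ht.2 n) (hc n)

theorem HasSum.mul_pow_of_shift {c : ℕ → ℝ} {t s : ℝ} (hc0 : c 0 = 0)
    (h : HasSum (fun n => c (n + 1) * t ^ n) s) : HasSum (fun n => c n * t ^ n) (t * s) := by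
  rw [← hasSum_nat_add_iff' 1, sum_range_one, hc0, zero_mul, sub_zero]
  exact (h.mul_left t).congr_fun fun n => by ring

theorem tsum_mul_pow_lt_self {c : ℕ → ℝ} {y : ℝ} (hc : ∀ n, 0 ≤ c n) (hc0 : c 0 = 0)
    (hc1 : c 1 < 1) (hy : 0 < y) (hs : Summable fun n => c n * y ^ n)
    (hfix : ∀ z ∈ Set.Ioc 0 y, ¬HasSum (fun n => c n * z ^ n) z) :
    ∑' n, c n * y ^ n < y := by
  set w : ℝ → ℝ := fun t => ∑' n, c (n + 1) * t ^ n
  have hsy : Summable fun n => c (n + 1) * y ^ n := by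
    refine ((summable_nat_add_iff 1).2 hs |>.mul_left y⁻¹).congr fun n => ?_
    field_simp
    ring
  have hw : ∀ t ∈ Set.Icc 0 y, HasSum (fun n => c (n + 1) * t ^ n) (w t) := fun t ht =>
    (hsy.of_nonneg_of_le (fun n => mul_nonneg (hc _) (pow_nonneg ht.1 n))
      fun n => mul_le_mul_of_nonneg_left (pow_le_pow_left₀ ht.1 ht.2 n) (hc _)).hasSum
  have hw0 : w 0 = c 1 := by
    simp only [w]
    rw [tsum_eq_single 0 fun n hn => by simp [hn]]
    simp
  have hwy : w y < 1 := by
    by_contra! h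
    obtain ⟨z, hz, hwz⟩ := intermediate_value_Icc hy.le
      (continuousOn_tsum_mul_pow (fun n => hc (n + 1)) hsy) (show 1 ∈ Set.Icc (w 0) (w y) from
        ⟨hw0 ▸ hc1.le, h⟩)
    have hz0 : z ≠ 0 := by rintro rfl; exact hc1.ne (hw0 ▸ hwz)
    exact hfix z ⟨hz.1.lt_of_ne' hz0, hz.2⟩ (by simpa [w, hwz] using (hw z hz).mul_pow_of_shift hc0)
  rw [((hw y ⟨hy.le, le_rfl⟩).mul_pow_of_shift hc0).tsum_eq]
  exact mul_lt_of_lt_one_right hy hwy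

def SatisfiesRecurrence (qm qp β a1 : ℝ) (a : ℕ → ℝ) : Prop :=
  ∀ n : ℕ, 2 ≤ n → a n =
    (β * ∑ k ∈ Icc 1 (n - 1), a k * a (n - k)
      + qm * ∑ k ∈ Icc 1 (n - 2), ((k : ℝ) + 1) * a (k + 1) * a (n - k)
      + β * ((n : ℝ) - 1) * a (n - 1))
    / (qp + β + (n : ℝ) * (qm + β) - ((n : ℝ) + 1) * qm * a1)

theorem recurrence_denom_pos {qm qp β a1 : ℝ} (hqm : 0 ≤ qm) (hβ : 0 < β) (ha1 : a1 ≤ 1)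
    (hE : qm * a1 < qp + β) (n : ℕ) :
    0 < qp + β + (n : ℝ) * (qm + β) - ((n : ℝ) + 1) * qm * a1 := by
  have : qm * a1 ≤ qm := mul_le_of_le_one_right hqm ha1
  have : 0 ≤ (n : ℝ) := n.cast_nonneg
  nlinarith

namespace SatisfiesRecurrence

variable {qm qp β a1 : ℝ} {a : ℕ → ℝ}

theorem nonneg (harec : SatisfiesRecurrence qm qp β a1 a) (hqm : 0 ≤ qm) (hβ : 0 < β)
    (ha1 : a1 ∈ Set.Icc 0 1) (hE : qm * a1 < qp + β) (ha0 : a 0 = 0) (ha1' : a 1 = a1) (n : ℕ) :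
    0 ≤ a n := by
  induction n using Nat.strong_induction_on with
  | _ n ih =>
    match n, ih with
    | 0, _ => exact ha0.ge
    | 1, _ => exact ha1' ▸ ha1.1
    | n + 2, ih =>
      rw [harec (n + 2) le_add_self]
      refine div_nonneg ?_ (recurrence_denom_pos hqm hβ ha1.2 hE _).le
      have hconv : 0 ≤ ∑ k ∈ Icc 1 (n + 2 - 1), a k * a (n + 2 - k) :=
        sum_nonneg fun k hk => by
          rw [mem_Icc] at hk
          exact mul_nonneg (ih k (by omega)) (ih _ (by omega))
      have hwconv : 0 ≤ ∑ k ∈ Icc 1 (n + 2 - 2), ((k : ℝ) + 1) * a (k + 1) * a (n + 2 - k) :=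
        sum_nonneg fun k hk => by
          rw [mem_Icc] at hk
          exact mul_nonneg (mul_nonneg (by positivity) (ih _ (by omega))) (ih _ (by omega))
      have hshift : 0 ≤ ((n + 2 : ℕ) - 1 : ℝ) * a (n + 2 - 1) :=
        mul_nonneg (by push_cast; linarith) (ih _ (by omega))
      linarith [mul_nonneg hβ.le hconv, mul_nonneg hqm hwconv, mul_nonneg hβ.le hshift]

theorem scaled_eq (harec : SatisfiesRecurrence qm qp β a1 a) {n : ℕ} (hn : 2 ≤ n)
    (hD : qp + β + (n : ℝ) * (qm + β) - ((n : ℝ) + 1) * qm * a1 ≠ 0) (z : ℝ) :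
    (qp + β + (n : ℝ) * (qm + β) - ((n : ℝ) + 1) * qm * a1) * (a n * z ^ n) * z =
      β * z * ∑ k ∈ Icc 1 (n - 1), a k * z ^ k * (a (n - k) * z ^ (n - k))
      + qm * ∑ k ∈ Icc 1 (n - 2),
          ((k : ℝ) + 1) * (a (k + 1) * z ^ (k + 1)) * (a (n - k) * z ^ (n - k))
      + β * z ^ 2 * (((n : ℝ) - 1) * (a (n - 1) * z ^ (n - 1))) := by
  have hconv : ∑ k ∈ Icc 1 (n - 1), a k * z ^ k * (a (n - k) * z ^ (n - k))
      = (∑ k ∈ Icc 1 (n - 1), a k * a (n - k)) * z ^ n := by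
    rw [sum_mul]
    refine sum_congr rfl fun k hk => ?_
    rw [mem_Icc] at hk
    rw [← pow_mul_pow_sub z (show k ≤ n by omega)]
    ring
  have hwconv : ∑ k ∈ Icc 1 (n - 2),
      ((k : ℝ) + 1) * (a (k + 1) * z ^ (k + 1)) * (a (n - k) * z ^ (n - k))
      = (∑ k ∈ Icc 1 (n - 2), ((k : ℝ) + 1) * a (k + 1) * a (n - k)) * z ^ (n + 1) := by
    rw [sum_mul]
    refine sum_congr rfl fun k hk => ?_
    rw [mem_Icc] at hk
    rw [← pow_mul_pow_sub z (show k + 1 ≤ n + 1 by omega), Nat.add_sub_add_right]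
    ring
  have hshift : z ^ 2 * z ^ (n - 1) = z ^ (n + 1) := by
    rw [← pow_add]
    congr 1
    omega
  have hrec := harec n hn
  rw [eq_div_iff hD] at hrec
  rw [hconv, hwconv]
  linear_combination z ^ (n + 1) * hrec - β * ((n : ℝ) - 1) * a (n - 1) * hshift

theorem mul_sum_Icc_two_le (harec : SatisfiesRecurrence qm qp β a1 a) (hqm : 0 ≤ qm) (hβ : 0 < β)
    (ha1 : a1 ≤ 1) (hE : qm * a1 < qp + β) (ha1' : a 1 = a1) (hnn : ∀ n, 0 ≤ a n) {z : ℝ}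
    (hz0 : 0 < z) (hz1 : z ≤ 1) (hX : ∀ N, ∑ k ∈ Icc 1 N, a k * z ^ k ≤ z) (N : ℕ) :
    (qp + β - qm * a1) * ∑ n ∈ Icc 2 N, a n * z ^ n ≤ β * z ^ 2 * (1 + a1) := by
  have ha1_nonneg : 0 ≤ a1 := ha1' ▸ hnn 1
  obtain hN | hN := Nat.lt_or_ge N 1
  · rw [Icc_eq_empty (by omega), sum_empty, mul_zero]
    positivity
  have hp : ∀ n, 0 ≤ a n * z ^ n := fun n => mul_nonneg (hnn n) (pow_nonneg hz0.le n)
  set V := ∑ n ∈ Icc 2 N, a n * z ^ n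
  set U := ∑ n ∈ Icc 2 N, (n : ℝ) * (a n * z ^ n)
  have hXV : a1 * z + V ≤ z := by
    simpa [sum_Icc_eq_add_sum_Icc_add_one _ hN, ha1'] using hX N
  have hU : 0 ≤ U := sum_nonneg fun n _ => mul_nonneg n.cast_nonneg (hp n)
  have hsum : z * ((qp + β - qm * a1) * V + (qm + β - qm * a1) * U) = ∑ n ∈ Icc 2 N,
      (qp + β + (n : ℝ) * (qm + β) - ((n : ℝ) + 1) * qm * a1) * (a n * z ^ n) * z := by
    simp only [V, U, mul_sum, ← sum_add_distrib]
    exact sum_congr rfl fun n _ => by ring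
  rw [sum_congr rfl fun n hn => harec.scaled_eq (mem_Icc.1 hn).1
    (recurrence_denom_pos hqm hβ ha1 hE n).ne' z, sum_add_distrib, sum_add_distrib, ← mul_sum,
    ← mul_sum, ← mul_sum] at hsum
  have hC1 : ∑ n ∈ Icc 2 N, ∑ k ∈ Icc 1 (n - 1), a k * z ^ k * (a (n - k) * z ^ (n - k))
      ≤ z ^ 2 :=
    (sum_conv_le_sq hp N).trans (pow_le_pow_left₀ (sum_nonneg fun n _ => hp n) (hX N) 2)
  have hC2 : ∑ n ∈ Icc 2 N, ∑ k ∈ Icc 1 (n - 2),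
      ((k : ℝ) + 1) * (a (k + 1) * z ^ (k + 1)) * (a (n - k) * z ^ (n - k)) ≤ U * (z - a1 * z) :=
    (sum_weighted_conv_le hp N).trans (mul_le_mul_of_nonneg_left (by linarith) hU)
  have hC3 : ∑ n ∈ Icc 2 N, ((n : ℝ) - 1) * (a (n - 1) * z ^ (n - 1)) ≤ a1 * z + U :=
    (sum_shift_le hp N).trans_eq (by simp [sum_Icc_eq_add_sum_Icc_add_one _ hN, ha1', U])
  have hβz : 0 ≤ β * z := by positivity
  have : z * ((qp + β - qm * a1) * V) ≤ z * (β * z ^ 2 * (1 + a1)) := by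
    nlinarith [mul_le_mul_of_nonneg_left hC1 hβz, mul_le_mul_of_nonneg_left hC2 hqm,
      mul_le_mul_of_nonneg_left hC3 (by positivity : 0 ≤ β * z ^ 2),
      mul_nonneg (mul_nonneg hβz hU) (sub_nonneg.2 hz1)]
  exact le_of_mul_le_mul_left this hz0

theorem not_hasSum_self (harec : SatisfiesRecurrence qm qp β a1 a) (hqm : 0 ≤ qm) (hβ : 0 < β)
    (ha1 : a1 < 1) (hE : qm * a1 < qp + β)
    (hquad : qm * a1 ^ 2 - (qm + β + (qp + β)) * a1 + qp = 0) (ha0 : a 0 = 0) (ha1' : a 1 = a1)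
    (hnn : ∀ n, 0 ≤ a n) {z : ℝ} (hz : z ∈ Set.Ioo 0 1) :
    ¬HasSum (fun n => a n * z ^ n) z := by
  intro h
  have hp : ∀ n, 0 ≤ a n * z ^ n := fun n => mul_nonneg (hnn n) (pow_nonneg hz.1.le n)
  have hbound := harec.mul_sum_Icc_two_le hqm hβ ha1.le hE ha1' hnn hz.1 hz.2.le
    fun N => sum_le_hasSum _ (fun i _ => hp i) h
  have hlim : (qp + β - qm * a1) * z ≤ (qp + β - qm * a1) * (a1 * z) + β * z ^ 2 * (1 + a1) := by
    refine le_of_tendsto ((h.tendsto_sum_nat.comp (Filter.tendsto_add_atTop_nat 1)).const_mul _) ?_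
    filter_upwards [Filter.eventually_ge_atTop 1] with N hN
    rw [Function.comp_apply, Nat.range_succ_eq_Icc_zero, sum_Icc_eq_add_sum_Icc_add_one _ N.zero_le,
      sum_Icc_eq_add_sum_Icc_add_one _ hN, ha0, ha1', zero_mul, zero_add, pow_one, mul_add]
    linarith [hbound N]
  have hkey : (qp + β - qm * a1) * (1 - a1) * z = β * (1 + a1) * z := by
    linear_combination z * hquad
  have ha1_nonneg : 0 ≤ a1 := ha1' ▸ hnn 1
  linarith [mul_pos (mul_pos hβ (by linarith : 0 < 1 + a1)) (mul_pos hz.1 (sub_pos.2 hz.2))]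

end SatisfiesRecurrence

/-- For `A(y) = ∑_{n=0}^∞ aₙ yⁿ`, one has `A(y) < y` for every `0 < y < 1`. -/
theorem A_lt_of_mem_Ioo
    (qm qp β Kp Km a1 : ℝ) (hqp : 0 < qp) (hq : qp < qm) (hβ : 0 < β)
    (hKp : Kp = qp + β) (hKm : Km = qm + β)
    (ha1 : a1 = (Km + Kp - Real.sqrt ((Km + Kp) ^ 2 - 4 * qm * qp)) / (2 * qm))
    (a : ℕ → ℝ) (ha0 : a 0 = 0) (ha1' : a 1 = a1)
    (harec : ∀ n : ℕ, 2 ≤ n → a n =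
      (β * ∑ k ∈ Finset.Icc 1 (n - 1), a k * a (n - k)
        + qm * ∑ k ∈ Finset.Icc 1 (n - 2), ((k : ℝ) + 1) * a (k + 1) * a (n - k)
        + β * ((n : ℝ) - 1) * a (n - 1))
      / (Kp + (n : ℝ) * Km - ((n : ℝ) + 1) * qm * a1)) :
    ∀ y : ℝ, 0 < y → y < 1 → (∑' n : ℕ, a n * y ^ n) < y := by
  subst hKp hKm
  have harec : SatisfiesRecurrence qm qp β a1 a := harec
  have hqm : 0 < qm := hqp.trans hq
  obtain ⟨hquad, ha1_pos, ha1_lt⟩ := quadratic_root_mem_Ioo hqm hqp (by linarith) ha1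
  have hE : qm * a1 < qp + β := by nlinarith
  have hnn := harec.nonneg hqm.le hβ ⟨ha1_pos.le, ha1_lt.le⟩ hE ha0 ha1'
  intro y hy0 hy1
  by_cases hs : Summable fun n => a n * y ^ n
  · exact tsum_mul_pow_lt_self hnn ha0 (ha1' ▸ ha1_lt) hy0 hs fun z hz =>
      harec.not_hasSum_self hqm.le hβ ha1_lt hE hquad ha0 ha1' hnn ⟨hz.1, hz.2.trans_lt hy1⟩
  · rw [tsum_eq_zero_of_not_summable hs]
    exact hy0
end

section
/- For every real μ, γ(μ) := −½(q₋ + q₊) + ½√((q₋ + q₊)² − 4(q₋ − q₊)μ + 4μ²) satisfies γ(μ) ≥ −½(√q₋ − √q₊)², with equality if and only if μ = ½(q₋ − q₊). In other words, the minimum over μ of the larger eigenvalue of the matrix with rows (−q₊ − μ, q₊) and (q₋, −q₋ + μ) is −½(√q₋ − √q₊)², attained at μ = ½(q₋ − q₊). -/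
/-! Completing the square, the radicand equals `(2μ − (q₋ − q₊))² + 4q₋q₊`, so `γ` is smallest
exactly where the square vanishes, at `μ = ½(q₋ − q₊)`; there `√(4q₋q₊) = 2√q₋√q₊` turns
`γ` into `−½(√q₋ − √q₊)²`. -/

lemma Real.sqrt_sq_add_eq_sqrt_iff {c : ℝ} (hc : 0 ≤ c) (x : ℝ) :
    √(x ^ 2 + c) = √c ↔ x = 0 := by
  rw [Real.sqrt_inj (by positivity) hc, add_eq_right, pow_eq_zero_iff two_ne_zero]

noncomputable def gamma (qm qp μ : ℝ) : ℝ :=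
  -(1 / 2) * (qm + qp) + (1 / 2) * √((qm + qp) ^ 2 - 4 * (qm - qp) * μ + 4 * μ ^ 2)

lemma gamma_eq_sqrt_sq_add (qm qp μ : ℝ) :
    gamma qm qp μ
      = -(1 / 2) * (qm + qp) + (1 / 2) * √((2 * μ - (qm - qp)) ^ 2 + 4 * (qm * qp)) := by
  unfold gamma
  congr 3
  ring

lemma gamma_half_sub (qm qp : ℝ) :
    gamma qm qp ((1 / 2) * (qm - qp)) = -(1 / 2) * (qm + qp) + (1 / 2) * √(4 * (qm * qp)) := by
  rw [gamma_eq_sqrt_sq_add, show 2 * ((1 / 2) * (qm - qp)) - (qm - qp) = 0 by ring,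
    zero_pow two_ne_zero, zero_add]

lemma gamma_half_sub_eq_neg_half_sq {qm qp : ℝ} (hqm : 0 ≤ qm) (hqp : 0 ≤ qp) :
    gamma qm qp ((1 / 2) * (qm - qp)) = -(1 / 2) * (√qm - √qp) ^ 2 := by
  have hsqrt4 : √(4 : ℝ) = 2 := by
    rw [show (4 : ℝ) = 2 ^ 2 by norm_num, Real.sqrt_sq zero_le_two]
  rw [gamma_half_sub, Real.sqrt_mul zero_le_four, hsqrt4, Real.sqrt_mul hqm, sub_sq,
    Real.sq_sqrt hqm, Real.sq_sqrt hqp]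
  ring

lemma gamma_half_sub_le (qm qp μ : ℝ) : gamma qm qp ((1 / 2) * (qm - qp)) ≤ gamma qm qp μ := by
  rw [gamma_half_sub, gamma_eq_sqrt_sq_add]
  gcongr
  exact le_add_of_nonneg_left (sq_nonneg _)

lemma gamma_eq_gamma_half_sub_iff {qm qp : ℝ} (hc : 0 ≤ qm * qp) (μ : ℝ) :
    gamma qm qp μ = gamma qm qp ((1 / 2) * (qm - qp)) ↔ μ = (1 / 2) * (qm - qp) := by
  rw [gamma_eq_sqrt_sq_add, gamma_half_sub, add_right_inj, mul_right_inj' one_half_pos.ne',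
    Real.sqrt_sq_add_eq_sqrt_iff (by positivity), sub_eq_zero]
  constructor <;> intro h <;> linarith

/-- `γ(μ) = −½(q₋+q₊) + ½√((q₋+q₊)² − 4(q₋−q₊)μ + 4μ²)` satisfies
`γ(μ) ≥ −½(√q₋ − √q₊)²`, with equality iff `μ = ½(q₋ − q₊)`. -/
theorem gamma_min
    (qm qp : ℝ) (hqp : 0 < qp) (hq : qp < qm) :
    ∀ μ : ℝ,
      (-(1 / 2) * (qm + qp)
          + (1 / 2) * Real.sqrt ((qm + qp) ^ 2 - 4 * (qm - qp) * μ + 4 * μ ^ 2))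
        ≥ -(1 / 2) * (Real.sqrt qm - Real.sqrt qp) ^ 2 ∧
      ((-(1 / 2) * (qm + qp)
          + (1 / 2) * Real.sqrt ((qm + qp) ^ 2 - 4 * (qm - qp) * μ + 4 * μ ^ 2))
        = -(1 / 2) * (Real.sqrt qm - Real.sqrt qp) ^ 2 ↔ μ = (1 / 2) * (qm - qp)) := by
  intro μ
  have hqm : 0 ≤ qm := hqp.le.trans hq.le
  have hc : 0 ≤ qm * qp := mul_nonneg hqm hqp.le
  rw [← gamma_half_sub_eq_neg_half_sq hqm hqp.le]
  exact ⟨gamma_half_sub_le qm qp μ, gamma_eq_gamma_half_sub_iff hc μ⟩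
end

section
/- Let μ = ½(q₋ − q₊) and let M be the 2×2 real matrix with rows (−q₊ − μ, q₊) and (q₋, −q₋ + μ). Then there exists a constant C > 0 such that for all t ≥ 0, the operator norm of the matrix exponential exp(t • M) satisfies ‖exp(t • M)‖ ≤ C · e^{−β_c t}, where β_c = ½(√q₋ − √q₊)². -/
attribute [local instance] Matrix.linftyOpNormedRing Matrix.linftyOpNormedAlgebra

/-!
With `a = √q₊` and `b = √q₋` the matrix is `-(a² + b²)/2 + !![0, a²; b², 0]`, which is
diagonalised by the eigenvectors `(a, b)` and `(a, -b)`, with eigenvalues `-½(b - a)² = -β_c`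
and `-½(a + b)² ≤ -β_c`. Conjugating `exp(tM)` to a diagonal matrix bounds its norm by
`‖P‖ ‖P⁻¹‖ e^{-β_c t}`.
-/

open Matrix

theorem norm_exp_units_conj_le {𝔸 : Type*} [NormedRing 𝔸] [NormedAlgebra ℚ 𝔸]
    [CompleteSpace 𝔸] (u : 𝔸ˣ) (x : 𝔸) :
    ‖NormedSpace.exp (u * x * ↑u⁻¹ : 𝔸)‖
      ≤ ‖(u : 𝔸)‖ * ‖NormedSpace.exp x‖ * ‖(↑u⁻¹ : 𝔸)‖ := by
  rw [NormedSpace.exp_units_conj]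
  exact norm_mul₃_le

theorem Matrix.norm_exp_diagonal_le {n : Type*} [Fintype n] [DecidableEq n] {d : n → ℝ}
    {β : ℝ} (hd : ∀ i, d i ≤ β) : ‖NormedSpace.exp (diagonal d)‖ ≤ Real.exp β := by
  rw [exp_diagonal, linfty_opNorm_diagonal, pi_norm_le_iff_of_nonneg (Real.exp_pos β).le]
  intro i
  rw [Pi.coe_exp, ← Real.exp_eq_exp_ℝ, Real.norm_eq_abs, Real.abs_exp]
  exact Real.exp_le_exp.mpr (hd i)

theorem Matrix.norm_exp_smul_units_conj_diagonal_le {n : Type*} [Fintype n] [DecidableEq n]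
    (u : (Matrix n n ℝ)ˣ) {d : n → ℝ} {β t : ℝ} (hd : ∀ i, d i ≤ β) (ht : 0 ≤ t) :
    ‖NormedSpace.exp (t • ((u : Matrix n n ℝ) * diagonal d * (↑u⁻¹ : Matrix n n ℝ)))‖
      ≤ ‖(u : Matrix n n ℝ)‖ * ‖(↑u⁻¹ : Matrix n n ℝ)‖ * Real.exp (β * t) := by
  rw [← Matrix.smul_mul, ← Matrix.mul_smul, ← diagonal_smul]
  calc _ ≤ ‖(u : Matrix n n ℝ)‖ * ‖NormedSpace.exp (diagonal (t • d))‖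
          * ‖(↑u⁻¹ : Matrix n n ℝ)‖ := norm_exp_units_conj_le u _
    _ ≤ ‖(u : Matrix n n ℝ)‖ * Real.exp (β * t) * ‖(↑u⁻¹ : Matrix n n ℝ)‖ := by
        gcongr
        exact norm_exp_diagonal_le fun i => by
          simpa [mul_comm β] using mul_le_mul_of_nonneg_left (hd i) ht
    _ = _ := by ring

/-- The columns `(a, b)` and `(a, -b)` are eigenvectors of `!![0, a²; b², 0]`. -/
noncomputable def eigenbasis (a b : ℝ) (ha : a ≠ 0) (hb : b ≠ 0) :
    (Matrix (Fin 2) (Fin 2) ℝ)ˣ where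
  val := !![a, a; b, -b]
  inv := !![(2 * a)⁻¹, (2 * b)⁻¹; (2 * a)⁻¹, -(2 * b)⁻¹]
  val_inv := by
    rw [mul_fin_two, one_fin_two]
    ext i j; fin_cases i <;> fin_cases j <;> simp <;> field_simp <;> ring
  inv_val := by
    rw [mul_fin_two, one_fin_two]
    ext i j; fin_cases i <;> fin_cases j <;> simp <;> field_simp <;> ring

theorem eq_eigenbasis_conj_diagonal {a b : ℝ} (ha : a ≠ 0) (hb : b ≠ 0) :
    !![-(a ^ 2 + b ^ 2) / 2, a ^ 2; b ^ 2, -(a ^ 2 + b ^ 2) / 2]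
      = (eigenbasis a b ha hb : Matrix (Fin 2) (Fin 2) ℝ)
          * diagonal ![-((1 / 2) * (b - a) ^ 2), -((1 / 2) * (a + b) ^ 2)]
          * (↑(eigenbasis a b ha hb)⁻¹ : Matrix (Fin 2) (Fin 2) ℝ) := by
  simp only [eigenbasis, Units.inv_mk, Units.val_mk, diagonal_fin_two, mul_fin_two]
  ext i j; fin_cases i <;> fin_cases j <;> simp <;> field_simp <;> ring

/-- For `μ = ½(q₋ − q₊)` and `M` the matrix with rows `(−q₊ − μ, q₊)` and
`(q₋, −q₋ + μ)`, there is `C > 0` with `‖exp(tM)‖ ≤ C e^{−β_c t}` for all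
`t ≥ 0`, where `β_c = ½(√q₋ − √q₊)²`. -/
theorem matrix_exp_decay
    (qm qp : ℝ) (hqp : 0 < qp) (hq : qp < qm) :
    ∃ C : ℝ, 0 < C ∧ ∀ t : ℝ, 0 ≤ t →
      ‖NormedSpace.exp
          (t • (!![-qp - (1 / 2) * (qm - qp), qp;
                   qm, -qm + (1 / 2) * (qm - qp)] : Matrix (Fin 2) (Fin 2) ℝ))‖
        ≤ C * Real.exp (-((1 / 2) * (Real.sqrt qm - Real.sqrt qp) ^ 2) * t) := by
  obtain ⟨a, ha, rfl⟩ : ∃ a, 0 < a ∧ qp = a ^ 2 :=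
    ⟨√qp, Real.sqrt_pos.mpr hqp, (Real.sq_sqrt hqp.le).symm⟩
  obtain ⟨b, hb, rfl⟩ : ∃ b, 0 < b ∧ qm = b ^ 2 :=
    ⟨√qm, Real.sqrt_pos.mpr (hqp.trans hq), (Real.sq_sqrt (hqp.trans hq).le).symm⟩
  have hM : !![-a ^ 2 - (1 / 2) * (b ^ 2 - a ^ 2), a ^ 2;
        b ^ 2, -b ^ 2 + (1 / 2) * (b ^ 2 - a ^ 2)]
      = !![-(a ^ 2 + b ^ 2) / 2, a ^ 2; b ^ 2, -(a ^ 2 + b ^ 2) / 2] := by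
    ext i j
    fin_cases i <;> fin_cases j <;> simp <;> ring
  set u := eigenbasis a b ha.ne' hb.ne'
  refine ⟨‖(u : Matrix (Fin 2) (Fin 2) ℝ)‖ * ‖(↑u⁻¹ : Matrix (Fin 2) (Fin 2) ℝ)‖,
    mul_pos u.norm_pos u⁻¹.norm_pos, fun t ht => ?_⟩
  rw [Real.sqrt_sq ha.le, Real.sqrt_sq hb.le, hM, eq_eigenbasis_conj_diagonal]
  refine norm_exp_smul_units_conj_diagonal_le u (fun i => ?_) ht
  fin_cases i
  · exact le_rfl
  · simp only [Fin.mk_one, Matrix.cons_val_one, Matrix.cons_val_zero]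
    nlinarith [mul_pos ha hb]
end

section
/- Suppose 0 < β < β_c where β_c = ½(√q₋ − √q₊)². Let μ = ½(q₋ − q₊) and let M be the 2×2 real matrix with rows (−q₊ − μ, q₊) and (q₋, −q₋ + μ). Then there exist constants ε > 0, κ > 0 and C > 0 such that for all t ≥ 0, e^{(β + με) t} · ‖exp(t • M)‖ ≤ C · e^{−κ t}. (This is the matrix-exponential content of the large-deviation bound e^{βt} P^{±}[Φ_X(t) ≤ εt] ≤ C e^{−κt}.) -/
attribute [local instance] Matrix.linftyOpNormedRing Matrix.linftyOpNormedAlgebra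

/-!
Both diagonal entries of `M` equal `-m` with `m = (q₊ + q₋)/2`, so `M` is diagonalisable with
eigenvalues `-m ± √(q₊q₋)`, the larger of which is `-β_c`. Conjugating back costs only the constant
`‖S‖‖S⁻¹‖` of the eigenvector matrix `S`, so `‖exp(tM)‖ ≤ C e^{-β_c t}`. Splitting the gap
`β_c - β` in half between `με` and `κ` gives the bound.
-/

open NormedSpace

namespace Matrix

variable {n : Type*} [Fintype n] [DecidableEq n]

theorem norm_exp_diagonal_le_s17 {d : n → ℝ} {l : ℝ} (hd : ∀ i, d i ≤ l) :
    ‖exp (diagonal d)‖ ≤ Real.exp l := by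
  rw [exp_diagonal, linfty_opNorm_diagonal, Pi.exp_def]
  refine (pi_norm_le_iff_of_nonneg (Real.exp_pos l).le).2 fun i => ?_
  rw [← Real.exp_eq_exp_ℝ, Real.norm_of_nonneg (Real.exp_pos _).le]
  exact Real.exp_le_exp.2 (hd i)

theorem norm_exp_smul_le_of_mul_eq_mul_diagonal {M S : Matrix n n ℝ} {d : n → ℝ} {l t : ℝ}
    (hS : IsUnit S.det) (hMS : M * S = S * diagonal d) (hd : ∀ i, d i ≤ l) (ht : 0 ≤ t) :
    ‖exp (t • M)‖ ≤ ‖S‖ * ‖S⁻¹‖ * Real.exp (t * l) := by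
  have hconj : t • M = S * diagonal (t • d) * S⁻¹ := by
    rw [← mul_nonsing_inv_cancel_right S M hS, hMS, diagonal_smul, ← smul_mul_assoc,
      ← mul_smul_comm]
  have htd : ∀ i, (t • d) i ≤ t * l := fun i => mul_le_mul_of_nonneg_left (hd i) ht
  calc ‖exp (t • M)‖ = ‖S * exp (diagonal (t • d)) * S⁻¹‖ := by
        rw [hconj, exp_conj _ _ ((isUnit_iff_isUnit_det S).2 hS)]
    _ ≤ ‖S‖ * ‖exp (diagonal (t • d))‖ * ‖S⁻¹‖ := norm_mul₃_le
    _ ≤ ‖S‖ * Real.exp (t * l) * ‖S⁻¹‖ := by gcongr; exact norm_exp_diagonal_le_s17 htd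
    _ = ‖S‖ * ‖S⁻¹‖ * Real.exp (t * l) := by ring

theorem fin_two_mul_eigenvectors_eq_mul_diagonal (a b c : ℝ) (hab : 0 ≤ a * b) :
    !![c, a; b, c] * !![a, a; √(a * b), -√(a * b)] =
      !![a, a; √(a * b), -√(a * b)] * diagonal ![c + √(a * b), c - √(a * b)] := by
  have hs := Real.sq_sqrt hab
  ext i j
  fin_cases i <;> fin_cases j <;> simp [mul_apply, Fin.sum_univ_two] <;> linarith

theorem exists_norm_exp_smul_fin_two_le {a b : ℝ} (ha : 0 < a) (hb : 0 < b) (c : ℝ) :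
    ∃ C, 0 < C ∧ ∀ t, 0 ≤ t →
      ‖exp (t • !![c, a; b, c])‖ ≤ C * Real.exp (t * (c + √(a * b))) := by
  set S : Matrix (Fin 2) (Fin 2) ℝ := !![a, a; √(a * b), -√(a * b)]
  have hs : 0 < √(a * b) := Real.sqrt_pos.2 (mul_pos ha hb)
  have hS : IsUnit S.det := by
    rw [det_fin_two_of, isUnit_iff_ne_zero]
    nlinarith
  refine ⟨‖S‖ * ‖S⁻¹‖, ?_, fun t ht => ?_⟩
  · calc (0 : ℝ) < ‖(1 : Matrix (Fin 2) (Fin 2) ℝ)‖ := by rw [norm_one]; exact one_pos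
      _ = ‖S * S⁻¹‖ := by rw [mul_nonsing_inv S hS]
      _ ≤ ‖S‖ * ‖S⁻¹‖ := norm_mul_le S S⁻¹
  · refine norm_exp_smul_le_of_mul_eq_mul_diagonal hS
      (fin_two_mul_eigenvectors_eq_mul_diagonal a b c (mul_pos ha hb).le) (fun i => ?_) ht
    fin_cases i
    · exact le_rfl
    · show c - √(a * b) ≤ c + √(a * b)
      linarith

end Matrix

theorem Real.neg_half_add_add_sqrt_mul {a b : ℝ} (ha : 0 ≤ a) (hb : 0 ≤ b) :
    -((a + b) / 2) + √(a * b) = -(1 / 2 * (√b - √a) ^ 2) := by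
  rw [Real.sqrt_mul ha]
  nlinarith [Real.sq_sqrt ha, Real.sq_sqrt hb]

theorem large_deviation_matrix_bound_general
    (qm qp β : ℝ) (hqp : 0 < qp) (hq : qp < qm)
    (hβc : β < (1 / 2) * (Real.sqrt qm - Real.sqrt qp) ^ 2) :
    ∃ ε κ C : ℝ, 0 < ε ∧ 0 < κ ∧ 0 < C ∧ ∀ t : ℝ, 0 ≤ t →
      Real.exp ((β + (1 / 2) * (qm - qp) * ε) * t) *
        ‖NormedSpace.exp
            (t • (!![-qp - (1 / 2) * (qm - qp), qp;
                     qm, -qm + (1 / 2) * (qm - qp)] : Matrix (Fin 2) (Fin 2) ℝ))‖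
        ≤ C * Real.exp (-κ * t) := by
  have hqm : 0 < qm := hqp.trans hq
  have hM : (!![-qp - (1 / 2) * (qm - qp), qp; qm, -qm + (1 / 2) * (qm - qp)] :
      Matrix (Fin 2) (Fin 2) ℝ) = !![-((qp + qm) / 2), qp; qm, -((qp + qm) / 2)] := by
    ext i j; fin_cases i <;> fin_cases j <;> simp <;> ring
  obtain ⟨C, hC, hbound⟩ := Matrix.exists_norm_exp_smul_fin_two_le hqp hqm (-((qp + qm) / 2))
  rw [Real.neg_half_add_add_sqrt_mul hqp.le hqm.le] at hbound
  have hμ : 0 < (1 / 2) * (qm - qp) := by linarith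
  set κ := ((1 / 2) * (√qm - √qp) ^ 2 - β) / 2 with hκ_def
  have hκ : 0 < κ := by rw [hκ_def]; linarith
  refine ⟨κ / ((1 / 2) * (qm - qp)), κ, C, div_pos hκ hμ, hκ, hC, fun t ht => ?_⟩
  rw [hM, mul_div_cancel₀ κ hμ.ne']
  calc Real.exp ((β + κ) * t) * ‖exp (t • !![-((qp + qm) / 2), qp; qm, -((qp + qm) / 2)])‖
      ≤ Real.exp ((β + κ) * t) * (C * Real.exp (t * -((1 / 2) * (√qm - √qp) ^ 2))) := by
        gcongr; exact hbound t ht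
    _ = C * Real.exp (-κ * t) := by
      rw [mul_left_comm, ← Real.exp_add]; congr 2; rw [hκ_def]; ring

/-- (Matrix-exponential form of Lemma 4.2.) If `0 < β < β_c = ½(√q₋ − √q₊)²`,
then with `μ = ½(q₋ − q₊)` and `M` the matrix with rows `(−q₊ − μ, q₊)`,
`(q₋, −q₋ + μ)`, there exist `ε, κ, C > 0` such that
`e^{(β + με)t} ‖exp(tM)‖ ≤ C e^{−κ t}` for all `t ≥ 0`. -/
theorem large_deviation_matrix_bound
    (qm qp β : ℝ) (hqp : 0 < qp) (hq : qp < qm) (hβ : 0 < β)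
    (hβc : β < (1 / 2) * (Real.sqrt qm - Real.sqrt qp) ^ 2) :
    ∃ ε κ C : ℝ, 0 < ε ∧ 0 < κ ∧ 0 < C ∧ ∀ t : ℝ, 0 ≤ t →
      Real.exp ((β + (1 / 2) * (qm - qp) * ε) * t) *
        ‖NormedSpace.exp
            (t • (!![-qp - (1 / 2) * (qm - qp), qp;
                     qm, -qm + (1 / 2) * (qm - qp)] : Matrix (Fin 2) (Fin 2) ℝ))‖
        ≤ C * Real.exp (-κ * t) :=
  large_deviation_matrix_bound_general qm qp β hqp hq hβc
end

section
/- Suppose β = β_c := ½(√q₋ − √q₊)², and set λ = ½(q₋ − q₊) and m = √(q₋/q₊). Then the functions b(φ) = e^{λφ} and c(φ) = m e^{λφ} satisfy b'(φ) = (β − q₊) b(φ) + q₊ c(φ) and c'(φ) = −q₋ b(φ) + (q₋ − β) c(φ) for all real φ, and the functions d(φ) = (1/m) e^{−λφ} and e(φ) = e^{−λφ} satisfy e'(φ) = (β − q₋) e(φ) + q₋ d(φ) and d'(φ) = −q₊ e(φ) + (q₊ − β) d(φ) for all real φ. (These are the explicit expectation formulas E⁺N⁺(φ) = e^{λφ},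 E⁻N⁺(φ) = m e^{λφ}, E⁺N⁻(φ) = (1/m) e^{−λφ}, E⁻N⁻(φ) = e^{−λφ} of Theorem 4.4, expressed as solutions of the linear systems governed by the linearization matrix at (1,1).) -/
/-!
With `a = √q₋` and `b = √q₊` one has `β_c = ½(a - b)²`, `λ = ½(a² - b²)` and `m = a / b`, and
`(1, m)` is an eigenvector with eigenvalue `λ` of the matrix `[[β - q₊, q₊], [-q₋, q₋ - β]]`;
an exponential along an eigenvector solves the linear system. The second system is the first
with `q₋` and `q₊` exchanged, which leaves `β_c` unchanged and turns `λ` into `-λ` and `m`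
into `1 / m`.
-/

open Real

lemma deriv_exp_eigenvector {A B C D μ k : ℝ} (hb : μ = A + B * k) (hc : k * μ = C + D * k)
    (φ : ℝ) :
    deriv (fun ψ : ℝ => exp (μ * ψ)) φ = A * exp (μ * φ) + B * (k * exp (μ * φ)) ∧
      deriv (fun ψ : ℝ => k * exp (μ * ψ)) φ = C * exp (μ * φ) + D * (k * exp (μ * φ)) := by
  have hexp : HasDerivAt (fun ψ : ℝ => exp (μ * ψ)) (exp (μ * φ) * μ) φ := by
    simpa using ((hasDerivAt_id φ).const_mul μ).exp
  refine ⟨?_, ?_⟩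
  · rw [hexp.deriv]
    linear_combination exp (μ * φ) * hb
  · rw [(hexp.const_mul k).deriv]
    linear_combination exp (μ * φ) * hc

lemma critical_eigenvector {p q β lam m : ℝ} (hp : 0 ≤ p) (hq : 0 < q)
    (hβ : β = (1 / 2) * (√p - √q) ^ 2) (hlam : lam = (1 / 2) * (p - q)) (hm : m = √(p / q)) :
    lam = (β - q) + q * m ∧ m * lam = -p + (p - β) * m := by
  have hpa : √p ^ 2 = p := sq_sqrt hp
  have hqb : √q ^ 2 = q := sq_sqrt hq.le
  have hb : 0 < √q := sqrt_pos.mpr hq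
  rw [hm, sqrt_div' p hq.le, hβ, hlam]
  generalize √p = a at hpa ⊢
  generalize √q = b at hqb hb ⊢
  subst hpa hqb
  constructor <;> field_simp <;> ring

/-- (Theorem 4.4.) At criticality `β = β_c = ½(√q₋ − √q₊)²`, with
`λ = ½(q₋ − q₊)` and `m = √(q₋/q₊)`, the expectation functions
`b(φ) = e^{λφ}`, `c(φ) = m e^{λφ}`, `d(φ) = (1/m) e^{−λφ}`, `e(φ) = e^{−λφ}`
solve the linear systems governed by the linearization matrix at `(1,1)`. -/
theorem critical_expectation_solutions
    (qm qp β lam m : ℝ) (hqp : 0 < qp) (hq : qp < qm)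
    (hβ : β = (1 / 2) * (Real.sqrt qm - Real.sqrt qp) ^ 2)
    (hlam : lam = (1 / 2) * (qm - qp)) (hm : m = Real.sqrt (qm / qp)) :
    (∀ φ : ℝ,
      deriv (fun ψ : ℝ => Real.exp (lam * ψ)) φ
        = (β - qp) * Real.exp (lam * φ) + qp * (m * Real.exp (lam * φ)) ∧
      deriv (fun ψ : ℝ => m * Real.exp (lam * ψ)) φ
        = -qm * Real.exp (lam * φ) + (qm - β) * (m * Real.exp (lam * φ))) ∧
    (∀ φ : ℝ,
      deriv (fun ψ : ℝ => Real.exp (-lam * ψ)) φ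
        = (β - qm) * Real.exp (-lam * φ) + qm * ((1 / m) * Real.exp (-lam * φ)) ∧
      deriv (fun ψ : ℝ => (1 / m) * Real.exp (-lam * ψ)) φ
        = -qp * Real.exp (-lam * φ) + (qp - β) * ((1 / m) * Real.exp (-lam * φ))) := by
  have hqm : 0 < qm := hqp.trans hq
  obtain ⟨hb, hc⟩ := critical_eigenvector hqm.le hqp hβ hlam hm
  obtain ⟨hd, he⟩ := critical_eigenvector (p := qp) (q := qm) (β := β) (lam := -lam) (m := 1 / m) hqp.le hqm
    (by rw [hβ]; ring) (by rw [hlam]; ring) (by rw [hm, one_div, ← sqrt_inv, inv_div])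
  exact ⟨deriv_exp_eigenvector hb hc, deriv_exp_eigenvector hd he⟩
end

section
/- Suppose β = β_c := ½(√q₋ − √q₊)² and set m = √(q₋/q₊). Then for every x with 0 < x < 1, putting y = 1 + m(x − 1), one has q₋(y − x) + β(y − y²) < m · (q₊(y − x) + β(x² − x)). (Since q₊(y − x) + β(x² − x) < 0 there, this says that at every point of the line of slope m through (1,1) inside the unit square, the slope dy/dx of an integral curve of the system x' = q₊(y − x) + β(x² − x), y' = q₋(y − x) + β(y − y²) is strictly greater than m.) -/
/-!
Write `p = q₊`, `t = 1 - x`, and `m = √(q₋/q₊)`, so that `q₋ = m² p`, `y - x = -(m - 1) t` and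
`β_c = p (m - 1)² / 2`. The slope gap `m x' - y'` along the sloping side is then the quadratic
`m t (p (m - 1)² - 2β) + β m (m + 1) t²` in `t`; the critical value `β_c` is exactly the one that
kills its linear term, leaving `β m (m + 1) t² > 0`.
-/

open Real

lemma slope_gap_eq (p m β x : ℝ) :
    m * (p * ((1 + m * (x - 1)) - x) + β * (x ^ 2 - x))
      - (m ^ 2 * p * ((1 + m * (x - 1)) - x)
        + β * ((1 + m * (x - 1)) - (1 + m * (x - 1)) ^ 2))
    = m * (1 - x) * (p * (m - 1) ^ 2 - 2 * β) + β * m * (m + 1) * (1 - x) ^ 2 := by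
  ring

lemma horizontal_field_neg_on_sloping_side {p m β x : ℝ} (hp : 0 < p) (hm : 1 < m)
    (hβ : 0 ≤ β) (hx0 : 0 < x) (hx1 : x < 1) :
    p * ((1 + m * (x - 1)) - x) + β * (x ^ 2 - x) < 0 := by
  have hdrift : p * ((1 + m * (x - 1)) - x) < 0 := by
    have : (1 + m * (x - 1)) - x = (m - 1) * (x - 1) := by ring
    rw [this]
    exact mul_neg_of_pos_of_neg hp (mul_neg_of_pos_of_neg (by linarith) (by linarith))
  have hlogistic : β * (x ^ 2 - x) ≤ 0 :=
    mul_nonpos_of_nonneg_of_nonpos hβ (by nlinarith)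
  linarith

lemma sqrt_eq_sqrt_div_mul_sqrt (q : ℝ) {p : ℝ} (hp : 0 < p) : √q = √(q / p) * √p := by
  rw [sqrt_div' q hp.le, div_mul_cancel₀ _ (sqrt_pos.2 hp).ne']

lemma sq_sqrt_div_mul {q p : ℝ} (hq : 0 ≤ q) (hp : 0 < p) : √(q / p) ^ 2 * p = q := by
  rw [sq_sqrt (div_nonneg hq hp.le), div_mul_cancel₀ _ hp.ne']

lemma half_sq_sqrt_sub_sqrt_eq (q : ℝ) {p : ℝ} (hp : 0 < p) :
    (1 / 2) * (√q - √p) ^ 2 = p * (√(q / p) - 1) ^ 2 / 2 := by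
  rw [sqrt_eq_sqrt_div_mul_sqrt q hp]
  have hsq : √p ^ 2 = p := sq_sqrt hp.le
  linear_combination (√(q / p) - 1) ^ 2 / 2 * hsq

/-- In the critical case `β = β_c = ½(√q₋ − √q₊)²`, with `m = √(q₋/q₊)`, at every
point `(x, y)` with `0 < x < 1` and `y = 1 + m(x − 1)` (the sloping side of the
triangle), one has `q₋(y − x) + β(y − y²) < m (q₊(y − x) + β(x² − x))`, and
`q₊(y − x) + β(x² − x) < 0` there: the slope `dy/dx` of an integral curve
exceeds `m`. -/
theorem slope_comparison_on_sloping_side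
    (qm qp β m : ℝ) (hqp : 0 < qp) (hq : qp < qm)
    (hβ : β = (1 / 2) * (Real.sqrt qm - Real.sqrt qp) ^ 2)
    (hm : m = Real.sqrt (qm / qp)) :
    ∀ x : ℝ, 0 < x → x < 1 →
      qp * ((1 + m * (x - 1)) - x) + β * (x ^ 2 - x) < 0 ∧
      qm * ((1 + m * (x - 1)) - x) + β * ((1 + m * (x - 1)) - (1 + m * (x - 1)) ^ 2)
        < m * (qp * ((1 + m * (x - 1)) - x) + β * (x ^ 2 - x)) := by
  intro x hx0 hx1
  have hm1 : 1 < m := by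
    rw [hm, lt_sqrt zero_le_one, one_pow, one_lt_div hqp]
    exact hq
  have hqm : qm = m ^ 2 * qp := by
    rw [hm, sq_sqrt_div_mul (hqp.trans hq).le hqp]
  have hβc : β = qp * (m - 1) ^ 2 / 2 := by
    rw [hβ, hm, half_sq_sqrt_sub_sqrt_eq qm hqp]
  have hβ0 : 0 < β := by
    rw [hβc]
    have : 0 < (m - 1) ^ 2 := pow_pos (sub_pos.2 hm1) 2
    positivity
  refine ⟨horizontal_field_neg_on_sloping_side hqp hm1 hβ0.le hx0 hx1, ?_⟩
  have hgap := slope_gap_eq qp m β x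
  have hcritical : qp * (m - 1) ^ 2 - 2 * β = 0 := by rw [hβc]; ring
  rw [hcritical, mul_zero, zero_add, ← hqm] at hgap
  have : 0 < β * m * (m + 1) * (1 - x) ^ 2 := by
    have : 0 < 1 - x := sub_pos.2 hx1
    have : 0 < m := by linarith
    positivity
  linarith
end
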